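/- Let p be an odd prime and x ∈ ZMod p with x ≠ 0. Then ∑_{n=1}^{p-1} T_n(x) · ((-4)⁻¹)^n = (x³ - 3x² + 6x - 6)/x³ in ZMod p, where T_n(x) denotes the n-th Touchard polynomial evaluated at x (reduced mod p). -/

import Mathlib

open Polynomial

/-- The Touchard polynomials in `ℤ[X]`, determined by `touchard 0 = 1` and
`touchard (n+1) = X * ∑_{k=0}^{n} C(n,k) * touchard k`. -/
noncomputable def touchard : ℕ → ℤ[X]
  | 0 => 1
  | n + 1 => X * ∑ k ∈ (Finset.range (n + 1)).attach, (n.choose k : ℤ[X]) * touchard k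
decreasing_by exact Finset.mem_range.mp k.2

/-!
Mod `p`, Dobinski's formula `T_n(x) = e^{-x} ∑_j j^n x^j / j!` survives as an identity
`T_n(x) = ∑_{a ∈ 𝔽_p} w(a) a^n` for `n < p`, for weights `w` with `∑ w = 1` and
`x w(a) = (a + 1) w(a + 1) - x`: this relation turns the Touchard recursion into a shift of
the summation variable, up to `x ∑_a (a + 1)^n`, which vanishes for `n < p - 1`. Against this
representation `∑_{n=1}^{p-1} T_n(x) r^n` collapses to `-w(r⁻¹)`, since `∑_{n=1}^{p-1} y^n`
is `-1` at `y = 1` and `0` elsewhere in `𝔽_p`. For `r = (-4)⁻¹`, the shift relation read at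
`a = -1, -2, -3, -4` determines `w(-4)`.
-/

open Finset
open scoped Nat

theorem touchard_succ (n : ℕ) :
    touchard (n + 1) = X * ∑ k ∈ range (n + 1), (n.choose k : ℤ[X]) * touchard k := by
  rw [touchard, sum_attach (range (n + 1)) fun k ↦ (n.choose k : ℤ[X]) * touchard k]

theorem FiniteField.sum_Icc_one_card_sub_one_pow {K : Type*} [Field K] [Fintype K]
    [DecidableEq K] (y : K) :
    ∑ n ∈ Icc 1 (Fintype.card K - 1), y ^ n = if y = 1 then -1 else 0 := by
  have hq : 1 ≤ Fintype.card K := Fintype.card_pos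
  rw [← Ico_add_one_right_eq_Icc, Nat.sub_add_cancel hq]
  split_ifs with hy
  · simp [hy, Nat.cast_sub hq]
  · have h := geom_sum_Ico_mul y hq
    rw [FiniteField.pow_card, pow_one, sub_self] at h
    exact (mul_eq_zero.1 h).resolve_right (sub_ne_zero.2 hy)

structure IsDobinskiWeight {K : Type*} [Field K] [Fintype K] (x : K) (w : K → K) : Prop where
  sum_eq_one : ∑ a, w a = 1
  shift : ∀ a, x * w a = (a + 1) * w (a + 1) - x

namespace IsDobinskiWeight

variable {K : Type*} [Field K] [Fintype K] {x : K} {w : K → K}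

theorem touchard_eval (hw : IsDobinskiWeight x w) {n : ℕ} (hn : n < Fintype.card K) :
    aeval x (touchard n) = ∑ a, w a * a ^ n := by
  induction n using Nat.strong_induction_on with
  | _ n ih =>
    rcases n with _ | n
    · simp [touchard, hw.sum_eq_one]
    have hbinom : ∑ k ∈ range (n + 1), (n.choose k : K) * aeval x (touchard k)
        = ∑ a, w a * (a + 1) ^ n := by
      calc ∑ k ∈ range (n + 1), (n.choose k : K) * aeval x (touchard k)
          = ∑ a, ∑ k ∈ range (n + 1), w a * (a ^ k * 1 ^ (n - k) * n.choose k) := by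
            rw [sum_comm]
            refine sum_congr rfl fun k hk ↦ ?_
            have hk := mem_range.1 hk
            rw [ih k hk (by omega), mul_sum]
            exact sum_congr rfl fun a _ ↦ by ring
        _ = ∑ a, w a * (a + 1) ^ n := by simp only [← mul_sum, add_pow]
    calc aeval x (touchard (n + 1))
        = ∑ a, x * w a * (a + 1) ^ n := by
          rw [touchard_succ, map_mul, aeval_X, map_sum]
          simp only [map_mul, map_natCast]
          rw [hbinom, mul_sum]
          simp only [mul_assoc]
      _ = ∑ a, w (a + 1) * (a + 1) ^ (n + 1) - x * ∑ a, (a + 1) ^ n := by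
          rw [mul_sum, ← sum_sub_distrib]
          exact sum_congr rfl fun a _ ↦ by rw [hw.shift]; ring
      _ = ∑ a, w a * a ^ (n + 1) - x * ∑ a : K, a ^ n := by
          congr 1
          · exact Equiv.sum_comp (Equiv.addRight 1) fun a ↦ w a * a ^ (n + 1)
          · exact congrArg (x * ·) (Equiv.sum_comp (Equiv.addRight 1) fun a ↦ a ^ n)
      _ = ∑ a, w a * a ^ (n + 1) := by
          rw [FiniteField.sum_pow_lt_card_sub_one K n (by omega), mul_zero, sub_zero]

theorem sum_Icc_touchard_mul_pow [DecidableEq K] (hw : IsDobinskiWeight x w) {r : K}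
    (hr : r ≠ 0) :
    ∑ n ∈ Icc 1 (Fintype.card K - 1), aeval x (touchard n) * r ^ n = -w r⁻¹ := by
  calc ∑ n ∈ Icc 1 (Fintype.card K - 1), aeval x (touchard n) * r ^ n
      = ∑ a, w a * ∑ n ∈ Icc 1 (Fintype.card K - 1), (a * r) ^ n := by
        simp only [mul_sum]
        rw [sum_comm]
        refine sum_congr rfl fun n hn ↦ ?_
        have hn : n < Fintype.card K := by
          have := (mem_Icc.1 hn).2
          have := Fintype.card_pos (α := K)
          omega
        rw [hw.touchard_eval hn, sum_mul]
        exact sum_congr rfl fun a _ ↦ by ring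
    _ = ∑ a, w a * if a = r⁻¹ then -1 else 0 := by
        simp only [FiniteField.sum_Icc_one_card_sub_one_pow, mul_eq_one_iff_eq_inv₀ hr]
    _ = -w r⁻¹ := by simp

theorem apply_neg_four (hw : IsDobinskiWeight x w) (hx : x ≠ 0) :
    w (-4) = -(x ^ 3 - 3 * x ^ 2 + 6 * x - 6) / x ^ 3 := by
  have h1 := hw.shift (-1)
  have h2 := hw.shift (-2)
  have h3 := hw.shift (-3)
  have h4 := hw.shift (-4)
  norm_num at h1 h2 h3 h4
  have hw1 : w (-1) = -1 := mul_left_cancel₀ hx (by linear_combination h1)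
  field_simp
  linear_combination x ^ 2 * h4 - 3 * x * h3 + 6 * h2 - 6 * hw1

end IsDobinskiWeight

theorem add_pow_div_factorial {K : Type*} [Field K] (x y : K) {k : ℕ} (hk : (k ! : K) ≠ 0) :
    (x + y) ^ k / k ! = ∑ j ∈ range (k + 1), x ^ j / j ! * (y ^ (k - j) / (k - j)!) := by
  rw [add_pow, sum_div]
  refine sum_congr rfl fun j hj ↦ ?_
  have hchoose : (k.choose j : K) * j ! * (k - j)! = k ! := by
    rw [← Nat.choose_mul_factorial_mul_factorial (Nat.lt_succ_iff.1 (mem_range.1 hj))]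
    push_cast
    ring
  have hj : (j ! : K) ≠ 0 := fun h ↦ hk (by rw [← hchoose, h]; ring)
  have hkj : ((k - j)! : K) ≠ 0 := fun h ↦ hk (by rw [← hchoose, h]; ring)
  field_simp
  rw [← hchoose]
  ring

theorem ZMod.sum_val_eq_sum_range {M : Type*} [AddCommMonoid M] (n : ℕ) [NeZero n]
    (f : ℕ → M) : ∑ a : ZMod n, f a.val = ∑ j ∈ range n, f j := by
  obtain ⟨m, rfl⟩ := Nat.exists_eq_succ_of_ne_zero (NeZero.ne n)
  exact Fin.sum_univ_eq_sum_range f (m + 1)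

theorem ZMod.factorial_mul_factorial_sub_one_sub {p : ℕ} [Fact p.Prime] {j : ℕ} (hj : j < p) :
    (j ! * (p - 1 - j)! : ZMod p) = (-1) ^ (p - j) := by
  induction j with
  | zero => simp [ZMod.wilsons_lemma, ZMod.pow_card]
  | succ j ih =>
    have ih := ih (by omega)
    have hcast : ((p - 1 - j : ℕ) : ZMod p) = -(j + 1) := by
      have h := congrArg (Nat.cast : ℕ → ZMod p) (show p - 1 - j + (j + 1) = p by omega)
      push_cast [ZMod.natCast_self] at h
      linear_combination h
    have hfac : (p - 1 - j)! = (p - 1 - j) * (p - 1 - (j + 1))! := by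
      rw [← Nat.sub_sub]
      exact (Nat.mul_factorial_pred (by omega)).symm
    rw [hfac, show p - j = p - (j + 1) + 1 by omega, pow_succ] at ih
    push_cast [hcast] at ih
    rw [Nat.factorial_succ]
    push_cast
    linear_combination -ih

theorem ZMod.natCast_factorial_ne_zero {p : ℕ} [Fact p.Prime] {k : ℕ} (hk : k < p) :
    (k ! : ZMod p) ≠ 0 := by
  rw [Ne, ZMod.natCast_eq_zero_iff, Nat.Prime.dvd_factorial Fact.out]
  omega

-- The term `x^a / a!` of Dobinski's formula `T_n(x) = e^{-x} ∑_j j^n x^j / j!`, times `e^{-x}`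
-- truncated to the products `x^a / a! * (-x)^i / i!` of total degree `a + i < p`.
noncomputable def dobinskiWeight (p : ℕ) [Fact p.Prime] (x a : ZMod p) : ZMod p :=
  x ^ a.val / (a.val ! : ZMod p) * ∑ i ∈ range (p - a.val), (-x) ^ i / (i ! : ZMod p)

section Weights

variable {p : ℕ} [Fact p.Prime]

theorem sum_dobinskiWeight (x : ZMod p) : ∑ a, dobinskiWeight p x a = 1 := by
  calc ∑ a, dobinskiWeight p x a
      = ∑ j ∈ range p, ∑ i ∈ range (p - j), x ^ j / j ! * ((-x) ^ i / i !) := by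
        simp only [dobinskiWeight, mul_sum]
        exact ZMod.sum_val_eq_sum_range p fun j ↦
          ∑ i ∈ range (p - j), x ^ j / j ! * ((-x) ^ i / i !)
    _ = ∑ k ∈ range p, ∑ j ∈ range (k + 1), x ^ j / j ! * ((-x) ^ (k - j) / (k - j)!) :=
        (sum_range_diag_flip p fun j i ↦ x ^ j / j ! * ((-x) ^ i / i !)).symm
    _ = ∑ k ∈ range p, (x + -x) ^ k / k ! :=
        sum_congr rfl fun k hk ↦
          (add_pow_div_factorial x (-x) (ZMod.natCast_factorial_ne_zero (mem_range.1 hk))).symm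
    _ = 1 := by
        rw [add_neg_cancel, sum_eq_single_of_mem 0 (mem_range.2 (NeZero.pos p))] <;> simp_all

theorem dobinskiWeight_shift (x a : ZMod p) :
    x * dobinskiWeight p x a = (a + 1) * dobinskiWeight p x (a + 1) - x := by
  set j := a.val with hj_def
  have hj : j < p := ZMod.val_lt a
  have ha1 : a + 1 = ((j + 1 : ℕ) : ZMod p) := by
    push_cast
    rw [hj_def, ZMod.natCast_zmod_val]
  have hnext : (a + 1) * dobinskiWeight p x (a + 1)
      = x ^ (j + 1) / j ! * ∑ i ∈ range (p - 1 - j), (-x) ^ i / i ! := by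
    rcases (show j + 1 ≤ p from hj).lt_or_eq with h | h
    · have hj1 : ((j + 1 : ℕ) : ZMod p) ≠ 0 := by
        rw [Ne, ZMod.natCast_eq_zero_iff]
        exact Nat.not_dvd_of_pos_of_lt j.succ_pos h
      rw [ha1, dobinskiWeight, ZMod.val_cast_of_lt h, show p - (j + 1) = p - 1 - j by omega,
        Nat.factorial_succ, Nat.cast_mul]
      have := ZMod.natCast_factorial_ne_zero hj
      field_simp
    · rw [ha1, h, ZMod.natCast_self, show p - 1 - j = 0 by omega]
      simp
  have htail : x * (x ^ j / j ! * ((-x) ^ (p - 1 - j) / (p - 1 - j)!)) = -x := by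
    have hpow : x * x ^ j * (-x) ^ (p - 1 - j) = (-1) ^ (p - 1 - j) * x := by
      calc x * x ^ j * (-x) ^ (p - 1 - j) = (-1) ^ (p - 1 - j) * x ^ (1 + j + (p - 1 - j)) := by
            rw [neg_pow]; ring
        _ = (-1) ^ (p - 1 - j) * x := by
            rw [show 1 + j + (p - 1 - j) = p by omega, ZMod.pow_card]
    have := ZMod.natCast_factorial_ne_zero hj
    have := ZMod.natCast_factorial_ne_zero (show p - 1 - j < p by omega)
    field_simp
    rw [hpow, mul_assoc, ZMod.factorial_mul_factorial_sub_one_sub hj,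
      show p - j = p - 1 - j + 1 by omega, pow_succ]
    ring
  rw [hnext, dobinskiWeight, ← hj_def, show p - j = p - 1 - j + 1 by omega, sum_range_succ]
  linear_combination htail

theorem isDobinskiWeight_dobinskiWeight (x : ZMod p) :
    IsDobinskiWeight x (dobinskiWeight p x) :=
  ⟨sum_dobinskiWeight x, dobinskiWeight_shift x⟩

end Weights

theorem touchard_sum_m_four (p : ℕ) [hp : Fact p.Prime] (hp2 : p ≠ 2)
    (x : ZMod p) (hx : x ≠ 0) :
    ∑ n ∈ Finset.Icc 1 (p - 1), (aeval x (touchard n)) * ((-4 : ZMod p)⁻¹) ^ n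
      = (x ^ 3 - 3 * x ^ 2 + 6 * x - 6) / x ^ 3 := by
  have hw := isDobinskiWeight_dobinskiWeight x
  have h4 : (-4 : ZMod p) ≠ 0 := by
    rw [neg_ne_zero, show (4 : ZMod p) = 2 ^ 2 by norm_num]
    exact pow_ne_zero 2 (Ring.two_ne_zero (by rwa [ZMod.ringChar_zmod_n]))
  have := hw.sum_Icc_touchard_mul_pow (inv_ne_zero h4)
  rw [ZMod.card] at this
  rw [this, inv_inv, hw.apply_neg_four hx, neg_div, neg_neg]
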